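/- Let (P,<) be a finite poset, P* ⊆ P a subset containing all minimal and all maximal elements of (P,<), P∖P* = C ⊔ O a partition, and λ ∈ ℤ^{P*} a nonnegative dominant marking with decomposition coefficients α_K(λ). Define <' on P by: p <' q iff p < q and p ∉ P* ∪ O. Then the marked chain-order polytope O_{C,O}(P,<,λ) equals the Minkowski sum Σ_{K∈𝒥*} α_K(λ)·R_{ω_K}(P,<,<'), where for each order ideal K of (P*,<), R_{ω_K}(P,<,<') is the convex hull of the points 1_{max_{<'} J} over order ideals J of (P,<) with J ∩ P* = K. -/

import Mathlib

open Pointwise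

/-- `J` is an order ideal (lower set) with respect to the strict order relation `r`. -/
def IsLowerIdeal {P : Type*} (r : P → P → Prop) (J : Set P) : Prop :=
  ∀ ⦃p q : P⦄, r p q → q ∈ J → p ∈ J

/-- The set of `r`-maximal elements of `J`. -/
def maxElems {P : Type*} (r : P → P → Prop) (J : Set P) : Set P :=
  {p ∈ J | ∀ q ∈ J, ¬ r p q}

/-- The 0/1 indicator vector of `A ⊆ P`, as a point of `ℝ^P`. -/
noncomputable def ind {P : Type*} (A : Set P) : P → ℝ :=
  A.indicator 1

/-- The order ideal of `(P, r)` generated by `A`. -/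
def genIdeal {P : Type*} (r : P → P → Prop) (A : Set P) : Set P :=
  {p | ∃ q ∈ A, p = q ∨ r p q}

/-- The Hibi–Li operation `J1 *' J2` relative to the order `r`: the order ideal of `(P, r)`
generated by `(J1 ∩ J2) ∩ (max_r J1 ∪ max_r J2)`. -/
def starOp {P : Type*} (r : P → P → Prop) (J1 J2 : Set P) : Set P :=
  genIdeal r ((J1 ∩ J2) ∩ (maxElems r J1 ∪ maxElems r J2))

/-- The relative poset polytope `R(P, lt, lt')`: the convex hull of the points
`1_{max_{lt'} J}` over all order ideals `J` of `(P, lt)`. -/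
noncomputable def RPP {P : Type*} (lt lt' : P → P → Prop) : Set (P → ℝ) :=
  convexHull ℝ {x | ∃ J : Set P, IsLowerIdeal lt J ∧ x = ind (maxElems lt' J)}

/-- The dilation `m·Q = {m·x : x ∈ Q}`. -/
def dilate {P : Type*} (m : ℕ) (Q : Set (P → ℝ)) : Set (P → ℝ) :=
  (fun x => (m : ℝ) • x) '' Q

/-- The order polytope of `(P, lt)`. -/
def orderPolytope {P : Type*} (lt : P → P → Prop) : Set (P → ℝ) :=
  {x | (∀ p, 0 ≤ x p ∧ x p ≤ 1) ∧ ∀ p q, lt q p → x p ≤ x q}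

/-- The chain polytope of `(P, lt)`. -/
def chainPolytope {P : Type*} (lt : P → P → Prop) : Set (P → ℝ) :=
  {x | (∀ p, 0 ≤ x p) ∧ ∀ (k : ℕ) (c : Fin k → P),
    (∀ i j : Fin k, i < j → lt (c i) (c j)) → (∑ i, x (c i)) ≤ 1}


/-- The fundamental marked relative poset polytope `R_{ω_K}(P, lt, lt')`: the convex hull
of the points `1_{max_{lt'} J}` over order ideals `J` of `(P, lt)` with `J ∩ P* = K`. -/
noncomputable def RPPfund {P : Type*} (lt lt' : P → P → Prop) (Pstar K : Set P) :
    Set (P → ℝ) :=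
  convexHull ℝ
    {x | ∃ J : Set P, IsLowerIdeal lt J ∧ J ∩ Pstar = K ∧ x = ind (maxElems lt' J)}

/-- The set `𝒥*` of order ideals of the subposet `(P*, lt)`. -/
def idealsOn {P : Type*} (lt : P → P → Prop) (Pstar : Set P) : Set (Set P) :=
  {K | K ⊆ Pstar ∧ ∀ p q : P, p ∈ Pstar → q ∈ Pstar → lt p q → q ∈ K → p ∈ K}

/-- The marked relative poset polytope for a coefficient function `α : 𝒥* → ℕ`:
the Minkowski sum `Σ_{K ∈ 𝒥*} α_K · R_{ω_K}(P, lt, lt')`. -/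
noncomputable def RPPmarked {P : Type*} [Fintype P] (lt lt' : P → P → Prop)
    (Pstar : Set P) (α : Set P → ℕ) : Set (P → ℝ) :=
  ∑ K ∈ (Set.toFinite (idealsOn lt Pstar)).toFinset, dilate (α K) (RPPfund lt lt' Pstar K)


/-- The marked chain-order polytope `O_{C,O}(P, lt, λ)` for a real marking `lam`:
points `x` with `x_p = λ_p` on `P*`, `x_p ≥ 0` on `C`, and
`x_{p_1} + ⋯ + x_{p_r} ≤ x_a − x_b` for every chain `a < p_1 < ⋯ < p_r < b` (`r ≥ 0`)
with `a, b ∈ P* ∪ O` and all `p_i ∈ C`. -/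
def MCOP {P : Type*} (lt : P → P → Prop) (Pstar C O : Set P) (lam : P → ℝ) :
    Set (P → ℝ) :=
  {x | (∀ p ∈ Pstar, x p = lam p) ∧ (∀ p ∈ C, 0 ≤ x p) ∧
    ∀ (r : ℕ) (a b : P) (c : Fin r → P),
      a ∈ Pstar ∪ O → b ∈ Pstar ∪ O → (∀ i, c i ∈ C) →
      lt a b → (∀ i, lt a (c i) ∧ lt (c i) b) →
      (∀ i j : Fin r, i < j → lt (c i) (c j)) →
      (∑ i, x (c i)) ≤ x a - x b}


/-!
A vertex `1_{max_{<'} J}` with `J ∩ P* = K` satisfies the inequalities defining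
`O_{C,O}(P, <, 1_K)`, and these inequalities are stable under sums and nonnegative scaling of
points and markings together; this gives `Σ_K α_K · R_{ω_K} ⊆ O_{C,O}(P, <, λ)`.

Conversely, lift `x ∈ O_{C,O}(P, <, λ)` to the transfer map `W`, defined from the top down by
`W p = x p` off `C` and `W p = x p + max(0, max_{q > p} W q)` on `C`. The chain inequalities make
`W` order-reversing with values in `[0, σ]`, `σ = Σ_K α_K`, so every superlevel set
`J_t = {W > t}` is an order ideal, and `p ∈ max_{<'} J_t` iff `W p - x p ≤ t < W p`. Hence
`x = ∫₀^σ 1_{max_{<'} J_t} dt`, a finite sum since `t ↦ J_t` is a step function. On `P*` we have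
`W = λ = Σ_K α_K 1_K`, and because the `K` with `α_K ≠ 0` form a chain, `J_t ∩ P* = K` exactly for
`t` in an interval of length `α_K`. Grouping the levels by `J_t ∩ P*` writes `x` as
`Σ_K α_K · (a point of R_{ω_K})`.
-/

open scoped Finset
open Function (swap)

noncomputable def gapAfter (T : Finset ℝ) (t : ℝ) : ℝ :=
  if h : {s ∈ T | t < s}.Nonempty then {s ∈ T | t < s}.min' h - t else 0

theorem gapAfter_nonneg (T : Finset ℝ) (t : ℝ) : 0 ≤ gapAfter T t := by
  unfold gapAfter
  split_ifs with h
  · linarith [(Finset.mem_filter.1 (Finset.min'_mem _ h)).2]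
  · exact le_rfl

theorem gapAfter_eq_zero {T : Finset ℝ} {t : ℝ} (h : ∀ s ∈ T, s ≤ t) : gapAfter T t = 0 := by
  rw [gapAfter, dif_neg]
  rintro ⟨s, hs⟩
  rw [Finset.mem_filter] at hs
  exact (h s hs.1).not_gt hs.2

theorem sum_gapAfter_eq_sub {T : Finset ℝ} {a b : ℝ} (ha : a ∈ T) (hb : b ∈ T) (hab : a ≤ b) :
    ∑ t ∈ T with a ≤ t ∧ t < b, gapAfter T t = b - a := by
  induction hn : #{t ∈ T | a ≤ t ∧ t < b} using Nat.strong_induction_on generalizing a with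
  | _ n ih =>
  obtain rfl | hab := hab.eq_or_lt
  · rw [Finset.sum_eq_zero fun t ht => by grind, sub_self]
  have hne : {s ∈ T | a < s}.Nonempty := ⟨b, by simp [hb, hab]⟩
  set a' := {s ∈ T | a < s}.min' hne
  obtain ⟨ha'T, haa'⟩ : a' ∈ T ∧ a < a' := Finset.mem_filter.1 (Finset.min'_mem _ hne)
  have ha'b : a' ≤ b := Finset.min'_le _ _ (by simp [hb, hab])
  have hsplit : {t ∈ T | a ≤ t ∧ t < b} = insert a {t ∈ T | a' ≤ t ∧ t < b} := by
    ext t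
    simp only [Finset.mem_insert, Finset.mem_filter]
    constructor
    · rintro ⟨htT, hat, htb⟩
      obtain rfl | hat := hat.eq_or_lt
      · exact Or.inl rfl
      · exact Or.inr ⟨htT, Finset.min'_le _ _ (by simp [htT, hat]), htb⟩
    · rintro (rfl | ⟨htT, ha't, htb⟩)
      · exact ⟨ha, le_rfl, hab⟩
      · exact ⟨htT, by linarith, htb⟩
  have ha_notMem : a ∉ {t ∈ T | a' ≤ t ∧ t < b} := by simp [haa']
  have hcard : #{t ∈ T | a' ≤ t ∧ t < b} < n := by
    rw [← hn, hsplit, Finset.card_insert_of_notMem ha_notMem]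
    exact Nat.lt_succ_self _
  rw [hsplit, Finset.sum_insert ha_notMem, ih _ hcard ha'T ha'b rfl, gapAfter, dif_pos hne]
  ring

theorem sum_gapAfter_smul_ind_eq_sub {P : Type*} {T : Finset ℝ} {lo hi : P → ℝ}
    (hlo : ∀ p, lo p ∈ T) (hhi : ∀ p, hi p ∈ T) (hle : lo ≤ hi) :
    ∑ t ∈ T, gapAfter T t • ind {p | lo p ≤ t ∧ t < hi p} = hi - lo := by
  classical
  funext p
  simp only [Finset.sum_apply, Pi.smul_apply, ind, Set.indicator_apply, Set.mem_ofPred_eq,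
    Pi.one_apply, smul_eq_mul, mul_ite, mul_one, mul_zero, ← Finset.sum_filter, Pi.sub_apply]
  exact sum_gapAfter_eq_sub (hlo p) (hhi p) (hle p)

theorem sum_gapAfter_fiber_eq {ι : Type*} [DecidableEq ι] {T : Finset ℝ} {s : Finset ι}
    {key : ℝ → ι} (hkey : ∀ t ∈ T, key t ∈ s) {lo len : ι → ℝ} (hlen : ∀ i ∈ s, 0 ≤ len i)
    (hT : ∀ t ∈ T, 0 ≤ t ∧ t ≤ ∑ i ∈ s, len i) (h0 : 0 ∈ T) (hσ : ∑ i ∈ s, len i ∈ T)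
    (hlo : ∀ i ∈ s, lo i ∈ T) (hhi : ∀ i ∈ s, lo i + len i ∈ T)
    (hband : ∀ i ∈ s, ∀ t ∈ T, lo i ≤ t → t < lo i + len i → key t = i) :
    ∀ i ∈ s, ∑ t ∈ T with key t = i, gapAfter T t = len i := by
  have hge : ∀ i ∈ s, len i ≤ ∑ t ∈ T with key t = i, gapAfter T t := fun i hi =>
    calc len i = ∑ t ∈ T with lo i ≤ t ∧ t < lo i + len i, gapAfter T t := by
          rw [sum_gapAfter_eq_sub (hlo i hi) (hhi i hi) (by linarith [hlen i hi])]; ring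
      _ ≤ _ := Finset.sum_le_sum_of_subset_of_nonneg
          (fun t ht => by
            rw [Finset.mem_filter] at ht ⊢
            exact ⟨ht.1, hband i hi t ht.1 ht.2.1 ht.2.2⟩)
          (fun t _ _ => gapAfter_nonneg T t)
  -- the bands exhaust the total mass, so none of the inequalities `hge` can be strict
  have htotal : ∑ i ∈ s, ∑ t ∈ T with key t = i, gapAfter T t = ∑ i ∈ s, len i :=
    calc _ = ∑ t ∈ T, gapAfter T t := Finset.sum_fiberwise_of_maps_to hkey _
      _ = ∑ t ∈ T with 0 ≤ t ∧ t < ∑ i ∈ s, len i, gapAfter T t := by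
          refine (Finset.sum_filter_of_ne fun t ht hne => ⟨(hT t ht).1, ?_⟩).symm
          by_contra! hσt
          exact hne (gapAfter_eq_zero fun u hu => (hT u hu).2.trans hσt)
      _ = _ := by rw [sum_gapAfter_eq_sub h0 hσ (hT _ hσ).1, sub_zero]
  intro i hi
  exact ((Finset.sum_eq_sum_iff_of_le hge).1 htotal.symm i hi).symm

theorem sum_smul_mem_dilate_convexHull {P ι : Type*} {S : Set (P → ℝ)} (hS : S.Nonempty)
    {s : Finset ι} {w : ι → ℝ} {z : ι → P → ℝ} (hw : ∀ i ∈ s, 0 ≤ w i)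
    (hz : ∀ i ∈ s, z i ∈ S) {m : ℕ} (hsum : ∑ i ∈ s, w i = m) :
    ∑ i ∈ s, w i • z i ∈ dilate m (convexHull ℝ S) := by
  rcases Nat.eq_zero_or_pos m with rfl | hm
  · obtain ⟨v, hv⟩ := hS
    have hw0 : ∀ i ∈ s, w i = 0 :=
      (Finset.sum_eq_zero_iff_of_nonneg hw).1 (by exact_mod_cast hsum)
    refine ⟨v, subset_convexHull ℝ S hv, ?_⟩
    rw [Finset.sum_eq_zero fun i hi => by rw [hw0 i hi, zero_smul]]
    simp
  · have hm' : (0 : ℝ) < m := by exact_mod_cast hm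
    refine ⟨∑ i ∈ s, (w i / m) • z i,
      (convex_convexHull ℝ S).sum_mem (fun i hi => div_nonneg (hw i hi) hm'.le)
        (by rw [← Finset.sum_div, hsum, div_self hm'.ne'])
        (fun i hi => subset_convexHull ℝ S (hz i hi)), ?_⟩
    simp only [Finset.smul_sum, smul_smul]
    refine Finset.sum_congr rfl fun i _ => ?_
    rw [mul_div_cancel₀ _ hm'.ne']

section

open scoped Classical

variable {P : Type*}

theorem sum_smul_ind_apply (F : Finset (Set P)) (α : Set P → ℕ) (p : P) :
    (∑ K ∈ F, (α K : ℝ) • ind K) p = ((∑ K ∈ F with p ∈ K, α K : ℕ) : ℝ) := by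
  simp [Finset.sum_apply, ind, Set.indicator_apply, Finset.sum_filter]

theorem sum_smul_ind_apply_le (F : Finset (Set P)) (α : Set P → ℕ) (p : P) :
    (∑ K ∈ F, (α K : ℝ) • ind K) p ≤ ∑ K ∈ F, (α K : ℝ) := by
  rw [sum_smul_ind_apply, Nat.cast_sum]
  exact Finset.sum_le_sum_of_subset_of_nonneg (Finset.filter_subset _ _)
    fun K _ _ => Nat.cast_nonneg _

theorem sum_filter_subset_eq_add {F : Finset (Set P)} {K : Set P} (hK : K ∈ F)
    (α : Set P → ℕ) : ∑ K' ∈ F with K ⊆ K', α K' = α K + ∑ K' ∈ F with K ⊂ K', α K' := by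
  have : {K' ∈ F | K ⊆ K'} = insert K {K' ∈ F | K ⊂ K'} := by
    ext K'
    simp only [Finset.mem_filter, Finset.mem_insert, _root_.ssubset_iff_subset_ne]
    constructor
    · rintro ⟨hK', hsub⟩
      by_cases h : K = K'
      · exact Or.inl h.symm
      · exact Or.inr ⟨hK', hsub, h⟩
    · rintro (rfl | ⟨hK', hsub, -⟩)
      exacts [⟨hK, subset_rfl⟩, ⟨hK', hsub⟩]
  rw [this, Finset.sum_insert (by simp)]

theorem sum_filter_ssubset_add_le {F : Finset (Set P)} {K : Set P} (hK : K ∈ F)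
    (α : Set P → ℕ) : ∑ K' ∈ F with K ⊂ K', α K' + α K ≤ ∑ K' ∈ F, α K' := by
  rw [add_comm, ← sum_filter_subset_eq_add hK]
  exact Finset.sum_le_sum_of_subset (Finset.filter_subset _ _)

noncomputable def bandStart (F : Finset (Set P)) (α : Set P → ℕ) (K : Set P) : ℝ :=
  ((∑ K' ∈ F with K ⊂ K', α K' : ℕ) : ℝ)

noncomputable def bandEnds (F : Finset (Set P)) (α : Set P → ℕ) : Finset ℝ :=
  {0, ∑ K ∈ F, (α K : ℝ)} ∪ F.image (bandStart F α) ∪ F.image fun K => bandStart F α K + α K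

theorem bandStart_add_le {F : Finset (Set P)} {K : Set P} (hK : K ∈ F) (α : Set P → ℕ) :
    bandStart F α K + α K ≤ ∑ K ∈ F, (α K : ℝ) := by
  rw [bandStart]
  exact_mod_cast sum_filter_ssubset_add_le hK α

theorem mem_bandEnds_bounds {F : Finset (Set P)} {α : Set P → ℕ} {t : ℝ}
    (ht : t ∈ bandEnds F α) : 0 ≤ t ∧ t ≤ ∑ K ∈ F, (α K : ℝ) := by
  have hstart : ∀ K, 0 ≤ bandStart F α K := fun K => Nat.cast_nonneg _
  simp only [bandEnds, Finset.mem_union, Finset.mem_insert, Finset.mem_singleton,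
    Finset.mem_image] at ht
  rcases ht with ((rfl | rfl) | ⟨K, hK, rfl⟩) | ⟨K, hK, rfl⟩
  · exact ⟨le_rfl, by positivity⟩
  · exact ⟨by positivity, le_rfl⟩
  · exact ⟨hstart K, by linarith [bandStart_add_le hK α, Nat.cast_nonneg (α := ℝ) (α K)]⟩
  · exact ⟨add_nonneg (hstart K) (Nat.cast_nonneg _), bandStart_add_le hK α⟩

theorem setOf_lt_sum_eq {F : Finset (Set P)} {α : Set P → ℕ}
    (hα : ∀ K₁ K₂, α K₁ ≠ 0 → α K₂ ≠ 0 → K₁ ⊆ K₂ ∨ K₂ ⊆ K₁) {K : Set P} (hK : K ∈ F) {t : ℝ}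
    (hlo : bandStart F α K ≤ t) (hhi : t < bandStart F α K + α K) :
    {p | t < ((∑ K' ∈ F with p ∈ K', α K' : ℕ) : ℝ)} = K := by
  rw [bandStart] at hlo hhi
  have hαK : α K ≠ 0 := by
    rintro h
    rw [h, Nat.cast_zero, add_zero] at hhi
    linarith
  ext p
  constructor
  · intro hp
    by_contra hpK
    have hle : ∑ K' ∈ F with p ∈ K', α K' ≤ ∑ K' ∈ F with K ⊂ K', α K' := by
      refine Finset.sum_le_sum_of_ne_zero fun K' hK' hαK' => ?_
      rw [Finset.mem_filter] at hK' ⊢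
      refine ⟨hK'.1, ?_⟩
      rcases hα K' K hαK' hαK with h | h
      · exact absurd (h hK'.2) hpK
      · exact ssubset_of_subset_of_ne h (by rintro rfl; exact hpK hK'.2)
    have := (Nat.cast_le (α := ℝ)).2 hle
    simp only [Set.mem_ofPred_eq] at hp
    linarith
  · intro hpK
    have hle : α K + ∑ K' ∈ F with K ⊂ K', α K' ≤ ∑ K' ∈ F with p ∈ K', α K' := by
      rw [← sum_filter_subset_eq_add hK]
      refine Finset.sum_le_sum_of_subset fun K' hK' => ?_
      rw [Finset.mem_filter] at hK' ⊢
      exact ⟨hK'.1, hK'.2 hpK⟩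
    have := (Nat.cast_le (α := ℝ)).2 hle
    rw [Nat.cast_add] at this
    simp only [Set.mem_ofPred_eq]
    linarith

end

section

variable {P : Type*} {lt : P → P → Prop} {Pstar C O : Set P}

theorem MCOP_congr {l₁ l₂ : P → ℝ} (h : ∀ p ∈ Pstar, l₁ p = l₂ p) :
    MCOP lt Pstar C O l₁ = MCOP lt Pstar C O l₂ := by
  ext x
  refine and_congr (forall₂_congr fun p hp => ?_) Iff.rfl
  rw [h p hp]

theorem add_mem_MCOP {l₁ l₂ x y : P → ℝ} (hx : x ∈ MCOP lt Pstar C O l₁)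
    (hy : y ∈ MCOP lt Pstar C O l₂) : x + y ∈ MCOP lt Pstar C O (l₁ + l₂) := by
  refine ⟨fun p hp => by simp [hx.1 p hp, hy.1 p hp], fun p hp => ?_, ?_⟩
  · exact add_nonneg (hx.2.1 p hp) (hy.2.1 p hp)
  · intro r a b c ha hb hc hab hac hmono
    have h₁ := hx.2.2 r a b c ha hb hc hab hac hmono
    have h₂ := hy.2.2 r a b c ha hb hc hab hac hmono
    simp only [Pi.add_apply, Finset.sum_add_distrib]
    linarith

theorem smul_mem_MCOP {l x : P → ℝ} {m : ℝ} (hm : 0 ≤ m) (hx : x ∈ MCOP lt Pstar C O l) :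
    m • x ∈ MCOP lt Pstar C O (m • l) := by
  refine ⟨fun p hp => by simp [hx.1 p hp], fun p hp => mul_nonneg hm (hx.2.1 p hp), ?_⟩
  intro r a b c ha hb hc hab hac hmono
  simp only [Pi.smul_apply, smul_eq_mul, ← Finset.mul_sum, ← mul_sub]
  exact mul_le_mul_of_nonneg_left (hx.2.2 r a b c ha hb hc hab hac hmono) hm

theorem zero_mem_MCOP : (0 : P → ℝ) ∈ MCOP lt Pstar C O 0 :=
  ⟨fun _ _ => rfl, fun _ _ => le_rfl, fun _ _ _ _ _ _ _ _ _ _ => by simp⟩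

theorem sum_mem_MCOP {ι : Type*} (s : Finset ι) {x l : ι → P → ℝ}
    (h : ∀ i ∈ s, x i ∈ MCOP lt Pstar C O (l i)) :
    ∑ i ∈ s, x i ∈ MCOP lt Pstar C O (∑ i ∈ s, l i) := by
  classical
  induction s using Finset.induction_on with
  | empty => simpa using zero_mem_MCOP
  | insert i s hi ih =>
    rw [Finset.sum_insert hi, Finset.sum_insert hi]
    exact add_mem_MCOP (h i (Finset.mem_insert_self i s))
      (ih fun j hj => h j (Finset.mem_insert_of_mem hj))

theorem convex_MCOP {l : P → ℝ} : Convex ℝ (MCOP lt Pstar C O l) := by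
  intro x hx y hy a b ha hb hab
  simpa [← add_smul, hab] using add_mem_MCOP (smul_mem_MCOP ha hx) (smul_mem_MCOP hb hy)

theorem sum_le_of_chain_of_mem_MCOP {l x : P → ℝ} (hx : x ∈ MCOP lt Pstar C O l) {a b : P}
    (ha : a ∈ Pstar ∪ O) (hb : b ∈ Pstar ∪ O) (hab : lt a b) {cs : List P}
    (hcs : cs.Pairwise lt) (hcsC : ∀ c ∈ cs, c ∈ C ∧ lt a c ∧ lt c b) :
    (cs.map x).sum ≤ x a - x b := by
  simpa using hx.2.2 cs.length a b cs.get ha hb (fun i => (hcsC _ (cs.get_mem i)).1) hab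
    (fun i => (hcsC _ (cs.get_mem i)).2) (List.pairwise_iff_get.1 hcs)

theorem le_of_lt_of_mem_MCOP {l x : P → ℝ} (hx : x ∈ MCOP lt Pstar C O l) {a b : P}
    (ha : a ∈ Pstar ∪ O) (hb : b ∈ Pstar ∪ O) (hab : lt a b) : x b ≤ x a := by
  simpa using sum_le_of_chain_of_mem_MCOP hx ha hb hab List.Pairwise.nil (by simp)

theorem mem_maxElems_iff_mem {lt' : P → P → Prop}
    (hlt' : ∀ p q, lt' p q ↔ lt p q ∧ p ∉ Pstar ∪ O) {J : Set P} {p : P}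
    (hp : p ∈ Pstar ∪ O) : p ∈ maxElems lt' J ↔ p ∈ J :=
  ⟨And.left, fun h => ⟨h, fun q _ hpq => ((hlt' p q).1 hpq).2 hp⟩⟩

theorem ind_maxElems_mem_MCOP (hC : C = (Pstar ∪ O)ᶜ) {lt' : P → P → Prop}
    (hlt' : ∀ p q, lt' p q ↔ lt p q ∧ p ∉ Pstar ∪ O) {J : Set P} (hJ : IsLowerIdeal lt J) :
    ind (maxElems lt' J) ∈ MCOP lt Pstar C O (ind (J ∩ Pstar)) := by
  subst hC
  classical
  set A := maxElems lt' J
  have hA : ∀ {p}, p ∈ Pstar ∪ O → (p ∈ A ↔ p ∈ J) := mem_maxElems_iff_mem hlt'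
  refine ⟨fun p hp => ?_, fun p _ => Set.indicator_nonneg (fun _ _ => zero_le_one) p, ?_⟩
  · simp [ind, Set.indicator_apply, hA (Or.inl hp), hp]
  intro r a b c ha hb hc hab hac hmono
  simp only [ind]
  by_cases hex : ∃ i, c i ∈ A
  · obtain ⟨i, hi⟩ := hex
    -- two elements of a `C`-chain are `<'`-comparable, so at most one of them is `<'`-maximal
    have hunique : ∀ j, j ≠ i → c j ∉ A := by
      intro j hji hj
      rcases lt_or_gt_of_ne hji with h | h
      · exact hj.2 _ hi.1 ((hlt' _ _).2 ⟨hmono _ _ h, hc j⟩)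
      · exact hi.2 _ hj.1 ((hlt' _ _).2 ⟨hmono _ _ h, hc i⟩)
    have hsum : ∑ j, A.indicator 1 (c j) = (1 : ℝ) := by
      rw [Finset.sum_eq_single i (fun j _ hji => Set.indicator_of_notMem (hunique j hji) _)
        (by simp)]
      simp [hi]
    have haA : a ∈ A := (hA ha).2 (hJ (hac i).1 hi.1)
    have hbA : b ∉ A := fun hbA => hi.2 b hbA.1 ((hlt' _ _).2 ⟨(hac i).2, hc i⟩)
    simp [hsum, haA, hbA]
  · push Not at hex
    rw [Finset.sum_eq_zero fun j _ => Set.indicator_of_notMem (hex j) _, sub_nonneg]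
    by_cases hbA : b ∈ A
    · have haA : a ∈ A := (hA ha).2 (hJ hab hbA.1)
      simp [haA, hbA]
    · rw [Set.indicator_of_notMem hbA]
      exact Set.indicator_nonneg (fun _ _ => zero_le_one) a

theorem RPPfund_subset_MCOP (hC : C = (Pstar ∪ O)ᶜ) {lt' : P → P → Prop}
    (hlt' : ∀ p q, lt' p q ↔ lt p q ∧ p ∉ Pstar ∪ O) (K : Set P) :
    RPPfund lt lt' Pstar K ⊆ MCOP lt Pstar C O (ind K) := by
  refine convexHull_min ?_ convex_MCOP
  rintro _ ⟨J, hJ, rfl, rfl⟩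
  exact ind_maxElems_mem_MCOP hC hlt' hJ

theorem RPPmarked_subset_MCOP [Fintype P] (hC : C = (Pstar ∪ O)ᶜ) {lt' : P → P → Prop}
    (hlt' : ∀ p q, lt' p q ↔ lt p q ∧ p ∉ Pstar ∪ O) (α : Set P → ℕ) :
    RPPmarked lt lt' Pstar α ⊆
      MCOP lt Pstar C O (∑ K ∈ (Set.toFinite (idealsOn lt Pstar)).toFinset, (α K : ℝ) • ind K) := by
  intro x hx
  obtain ⟨y, hy, rfl⟩ := (Set.mem_finsetSum _ _ _).1 hx
  refine sum_mem_MCOP _ fun K hK => ?_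
  obtain ⟨z, hz, hzy⟩ := hy hK
  rw [← hzy]
  exact smul_mem_MCOP (Nat.cast_nonneg _) (RPPfund_subset_MCOP hC hlt' K hz)

end

section

variable {P : Type*} {lt : P → P → Prop} {Pstar C O : Set P}

theorem isLowerIdeal_preimage_Ioi {W : P → ℝ} (hW : ∀ p q, lt p q → W q ≤ W p) (t : ℝ) :
    IsLowerIdeal lt (W ⁻¹' Set.Ioi t) :=
  fun p q hpq hq => lt_of_lt_of_le hq (hW p q hpq)

theorem inter_mem_idealsOn {J : Set P} (hJ : IsLowerIdeal lt J) :
    J ∩ Pstar ∈ idealsOn lt Pstar :=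
  ⟨Set.inter_subset_right, fun _ _ hp _ hpq hq => ⟨hJ hpq hq.1, hp⟩⟩

theorem isLowerIdeal_genIdeal [IsTrans P lt] (A : Set P) : IsLowerIdeal lt (genIdeal lt A) := by
  rintro p q hpq ⟨a, ha, rfl | hqa⟩
  exacts [⟨q, ha, Or.inr hpq⟩, ⟨a, ha, Or.inr (_root_.trans hpq hqa)⟩]

theorem genIdeal_inter_eq {K : Set P} (hK : K ∈ idealsOn lt Pstar) :
    genIdeal lt K ∩ Pstar = K := by
  ext p
  constructor
  · rintro ⟨⟨q, hq, rfl | hpq⟩, hp⟩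
    exacts [hq, hK.2 p q hp (hK.1 hq) hpq hq]
  · exact fun hp => ⟨⟨p, hp, Or.inl rfl⟩, hK.1 hp⟩

theorem exists_maximal_above [Finite P] [IsStrictOrder P lt] (p : P) :
    ∃ M, (M = p ∨ lt p M) ∧ ∀ q, ¬ lt M q := by
  obtain ⟨M, hM, hmin⟩ := (Finite.wellFounded_of_trans_of_irrefl (swap lt)).has_min
    {M | M = p ∨ lt p M} ⟨p, Or.inl rfl⟩
  refine ⟨M, hM, fun q hq => hmin q ?_ hq⟩
  rcases hM with rfl | h
  exacts [Or.inr hq, Or.inr (_root_.trans h hq)]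

theorem nonneg_of_mem_MCOP [Finite P] [IsStrictOrder P lt]
    (hmax : ∀ p, (∀ q, ¬ lt p q) → p ∈ Pstar) (hC : C = (Pstar ∪ O)ᶜ) {l x : P → ℝ}
    (hl : ∀ p ∈ Pstar, 0 ≤ l p) (hx : x ∈ MCOP lt Pstar C O l) (p : P) : 0 ≤ x p := by
  by_cases hp : p ∈ C
  · exact hx.2.1 p hp
  obtain ⟨M, hM, hMmax⟩ := exists_maximal_above (lt := lt) p
  have hMP := hmax M hMmax
  have hxM : 0 ≤ x M := (hx.1 M hMP).symm ▸ hl M hMP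
  rcases hM with rfl | hpM
  · exact hxM
  · have hp' : p ∈ Pstar ∪ O := by rw [hC] at hp; exact not_not.1 hp
    exact hxM.trans (le_of_lt_of_mem_MCOP hx hp' (Or.inl hMP) hpM)

theorem pairwise_append_singleton_of_chain [IsTrans P lt] {cs : List P} {a p b : P}
    (hcs : cs.Pairwise lt) (hcsC : ∀ c ∈ cs, c ∈ C ∧ lt a c ∧ lt c p) (hp : p ∈ C)
    (hap : lt a p) (hpb : lt p b) :
    (cs ++ [p]).Pairwise lt ∧ ∀ c ∈ cs ++ [p], c ∈ C ∧ lt a c ∧ lt c b := by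
  refine ⟨List.pairwise_append.2 ⟨hcs, List.pairwise_singleton _ _, fun c hc q hq => ?_⟩, ?_⟩
  · rw [List.mem_singleton.1 hq]
    exact (hcsC c hc).2.2
  · simp only [List.mem_append, List.mem_singleton]
    rintro c (hc | rfl)
    · exact ⟨(hcsC c hc).1, (hcsC c hc).2.1, _root_.trans (hcsC c hc).2.2 hpb⟩
    · exact ⟨hp, hap, hpb⟩

end

section

variable {P : Type*} [Fintype P] {lt : P → P → Prop}

open Classical in
noncomputable def supAbove (lt : P → P → Prop) (p : P) (f : ∀ q, lt p q → ℝ) : ℝ :=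
  (insert 0 (Finset.univ.image fun q : {q // lt p q} => f q q.2)).max'
    (Finset.insert_nonempty _ _)

theorem le_supAbove {p q : P} (f : ∀ q, lt p q → ℝ) (h : lt p q) :
    f q h ≤ supAbove lt p f := by
  classical
  refine Finset.le_max' _ _ (Finset.mem_insert_of_mem ?_)
  exact Finset.mem_image.2 ⟨⟨q, h⟩, Finset.mem_univ _, rfl⟩

theorem supAbove_nonneg (p : P) (f : ∀ q, lt p q → ℝ) : 0 ≤ supAbove lt p f :=
  Finset.le_max' _ _ (Finset.mem_insert_self _ _)

theorem supAbove_le {p : P} {f : ∀ q, lt p q → ℝ} {t : ℝ} (ht : 0 ≤ t)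
    (h : ∀ q hq, f q hq ≤ t) : supAbove lt p f ≤ t :=
  Finset.max'_le _ _ _ fun y hy => by
    obtain rfl | hy := Finset.mem_insert.1 hy
    · exact ht
    obtain ⟨⟨q, hq⟩, -, rfl⟩ := Finset.mem_image.1 hy
    exact h q hq

theorem supAbove_eq_zero_or (p : P) (f : ∀ q, lt p q → ℝ) :
    supAbove lt p f = 0 ∨ ∃ q hq, supAbove lt p f = f q hq := by
  obtain h | h := Finset.mem_insert.1 (Finset.max'_mem _ _ : supAbove lt p f ∈ _)
  · exact Or.inl h
  · obtain ⟨⟨q, hq⟩, -, h⟩ := Finset.mem_image.1 h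
    exact Or.inr ⟨q, hq, h.symm⟩

open Classical in
noncomputable def transferMap (lt : P → P → Prop) [IsStrictOrder P lt] (C : Set P)
    (x : P → ℝ) : P → ℝ :=
  (Finite.wellFounded_of_trans_of_irrefl (swap lt)).fix fun p W =>
    x p + if p ∈ C then supAbove lt p W else 0

variable [IsStrictOrder P lt] {Pstar C O : Set P} {l x : P → ℝ}

theorem transferMap_of_mem {p : P} (hp : p ∈ C) :
    transferMap lt C x p = x p + supAbove lt p fun q _ => transferMap lt C x q := by
  rw [transferMap, WellFounded.fix_eq, if_pos hp]

theorem transferMap_of_notMem {p : P} (hp : p ∉ C) : transferMap lt C x p = x p := by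
  rw [transferMap, WellFounded.fix_eq, if_neg hp, add_zero]

theorem transferMap_sub_nonneg (p : P) : 0 ≤ transferMap lt C x p - x p := by
  by_cases hp : p ∈ C
  · rw [transferMap_of_mem hp, add_sub_cancel_left]
    exact supAbove_nonneg _ _
  · rw [transferMap_of_notMem hp, sub_self]

theorem transferMap_of_mem_Pstar (hC : C = (Pstar ∪ O)ᶜ) (hx : x ∈ MCOP lt Pstar C O l) {p : P}
    (hp : p ∈ Pstar) : transferMap lt C x p = l p := by
  rw [transferMap_of_notMem (by rw [hC]; exact not_not.2 (Or.inl hp)), hx.1 p hp]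

theorem sum_add_transferMap_le (hmax : ∀ p, (∀ q, ¬ lt p q) → p ∈ Pstar)
    (hC : C = (Pstar ∪ O)ᶜ) (hl : ∀ p ∈ Pstar, 0 ≤ l p) (hx : x ∈ MCOP lt Pstar C O l)
    (p : P) {a : P} (ha : a ∈ Pstar ∪ O) (hap : lt a p) {cs : List P} (hcs : cs.Pairwise lt)
    (hcsC : ∀ c ∈ cs, c ∈ C ∧ lt a c ∧ lt c p) :
    (cs.map x).sum + transferMap lt C x p ≤ x a := by
  induction p using (Finite.wellFounded_of_trans_of_irrefl (swap lt)).induction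
    generalizing cs with
  | _ p ih =>
  by_cases hp : p ∈ C
  · have hsum : ((cs ++ [p]).map x).sum = (cs.map x).sum + x p := by simp
    rw [transferMap_of_mem hp]
    rcases supAbove_eq_zero_or (lt := lt) p fun q _ => transferMap lt C x q with h0 | ⟨q, hpq, hq⟩
    · -- close the chain `a < cs < p` off by a maximal element `M > p`, which lies in `P*`
      obtain ⟨M, hM, hMmax⟩ := exists_maximal_above (lt := lt) p
      have hMP := hmax M hMmax
      have hpM : lt p M := hM.resolve_left (by rintro rfl; rw [hC] at hp; exact hp (Or.inl hMP))
      obtain ⟨hcs', hcsC'⟩ := pairwise_append_singleton_of_chain hcs hcsC hp hap hpM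
      have hchain := sum_le_of_chain_of_mem_MCOP hx ha (Or.inl hMP) (_root_.trans hap hpM)
        hcs' hcsC'
      have hxM : 0 ≤ x M := (hx.1 M hMP).symm ▸ hl M hMP
      rw [h0]
      linarith
    · obtain ⟨hcs', hcsC'⟩ := pairwise_append_singleton_of_chain hcs hcsC hp hap hpq
      have := ih q hpq (_root_.trans hap hpq) hcs' hcsC'
      rw [hq]
      linarith
  · have hp' : p ∈ Pstar ∪ O := by rw [hC] at hp; exact not_not.1 hp
    rw [transferMap_of_notMem hp]
    linarith [sum_le_of_chain_of_mem_MCOP hx ha hp' hap hcs hcsC]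

theorem transferMap_antitone (hmax : ∀ p, (∀ q, ¬ lt p q) → p ∈ Pstar)
    (hC : C = (Pstar ∪ O)ᶜ) (hl : ∀ p ∈ Pstar, 0 ≤ l p) (hx : x ∈ MCOP lt Pstar C O l)
    {p q : P} (hpq : lt p q) : transferMap lt C x q ≤ transferMap lt C x p := by
  by_cases hp : p ∈ C
  · rw [transferMap_of_mem hp]
    linarith [le_supAbove (fun q _ => transferMap lt C x q) hpq, hx.2.1 p hp]
  · have hp' : p ∈ Pstar ∪ O := by rw [hC] at hp; exact not_not.1 hp
    rw [transferMap_of_notMem hp]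
    simpa using sum_add_transferMap_le hmax hC hl hx q hp' hpq List.Pairwise.nil (by simp)

theorem transferMap_le (hmin : ∀ p, (∀ q, ¬ lt q p) → p ∈ Pstar)
    (hmax : ∀ p, (∀ q, ¬ lt p q) → p ∈ Pstar) (hC : C = (Pstar ∪ O)ᶜ)
    (hl : ∀ p ∈ Pstar, 0 ≤ l p) (hx : x ∈ MCOP lt Pstar C O l) {B : ℝ}
    (hB : ∀ p ∈ Pstar, l p ≤ B) (p : P) : transferMap lt C x p ≤ B := by
  obtain ⟨m, hm, hmmin⟩ := exists_maximal_above (lt := swap lt) p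
  have hmP := hmin m hmmin
  have hWm : transferMap lt C x m ≤ B := (transferMap_of_mem_Pstar hC hx hmP).symm ▸ hB m hmP
  rcases hm with rfl | hmp
  exacts [hWm, (transferMap_antitone hmax hC hl hx hmp).trans hWm]

theorem maxElems_preimage_Ioi_transferMap (hC : C = (Pstar ∪ O)ᶜ) {lt' : P → P → Prop}
    (hlt' : ∀ p q, lt' p q ↔ lt p q ∧ p ∉ Pstar ∪ O) {t : ℝ} (ht : 0 ≤ t) :
    maxElems lt' (transferMap lt C x ⁻¹' Set.Ioi t) =
      {p | transferMap lt C x p - x p ≤ t ∧ t < transferMap lt C x p} := by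
  ext p
  by_cases hp : p ∈ C
  · have hlt'p : ∀ q, lt' p q ↔ lt p q := fun q => by
      rw [hlt', and_iff_left]
      rw [hC] at hp
      exact hp
    simp only [maxElems, Set.mem_ofPred_eq, Set.mem_preimage, Set.mem_Ioi, hlt'p]
    rw [transferMap_of_mem hp, add_sub_cancel_left]
    constructor
    · rintro ⟨h₁, h₂⟩
      exact ⟨supAbove_le ht fun q hq => not_lt.1 fun h => h₂ q h hq, h₁⟩
    · rintro ⟨h₁, h₂⟩
      exact ⟨h₂, fun q hq hpq => ((le_supAbove _ hpq).trans h₁).not_gt hq⟩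
  · have hp' : p ∈ Pstar ∪ O := by rw [hC] at hp; exact not_not.1 hp
    rw [mem_maxElems_iff_mem hlt' hp', Set.mem_ofPred_eq, transferMap_of_notMem hp, sub_self]
    simp [ht, transferMap_of_notMem hp]

theorem eq_sum_gapAfter_smul_ind_maxElems (hC : C = (Pstar ∪ O)ᶜ) {lt' : P → P → Prop}
    (hlt' : ∀ p q, lt' p q ↔ lt p q ∧ p ∉ Pstar ∪ O) (hx : ∀ p, 0 ≤ x p) {T : Finset ℝ}
    (hT : ∀ t ∈ T, 0 ≤ t) (hW : ∀ p, transferMap lt C x p ∈ T)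
    (hWx : ∀ p, transferMap lt C x p - x p ∈ T) :
    x = ∑ t ∈ T, gapAfter T t • ind (maxElems lt' (transferMap lt C x ⁻¹' Set.Ioi t)) := by
  rw [Finset.sum_congr rfl fun t ht => by rw [maxElems_preimage_Ioi_transferMap hC hlt' (hT t ht)],
    sum_gapAfter_smul_ind_eq_sub hWx hW fun p => sub_le_self _ (hx p)]
  funext p
  simp

end

section

open scoped Classical

variable {P : Type*} [Fintype P] {lt : P → P → Prop} {Pstar C O : Set P}

noncomputable abbrev idealFinset (lt : P → P → Prop) (Pstar : Set P) : Finset (Set P) :=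
  (Set.toFinite (idealsOn lt Pstar)).toFinset

theorem sum_gapAfter_smul_ind_mem_RPPmarked [IsTrans P lt] {lt' : P → P → Prop}
    {α : Set P → ℕ} (hα : ∀ K₁ K₂, α K₁ ≠ 0 → α K₂ ≠ 0 → K₁ ⊆ K₂ ∨ K₂ ⊆ K₁) {W : P → ℝ}
    (hW : ∀ p q, lt p q → W q ≤ W p)
    (hWP : ∀ p ∈ Pstar, W p = ((∑ K ∈ idealFinset lt Pstar with p ∈ K, α K : ℕ) : ℝ))
    {T : Finset ℝ} (hT : ∀ t ∈ T, 0 ≤ t ∧ t ≤ ∑ K ∈ idealFinset lt Pstar, (α K : ℝ))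
    (hbands : bandEnds (idealFinset lt Pstar) α ⊆ T) :
    ∑ t ∈ T, gapAfter T t • ind (maxElems lt' (W ⁻¹' Set.Ioi t)) ∈ RPPmarked lt lt' Pstar α := by
  set 𝒥 := idealFinset lt Pstar
  have hkey : ∀ t ∈ T, W ⁻¹' Set.Ioi t ∩ Pstar ∈ 𝒥 := fun t _ =>
    (Set.Finite.mem_toFinset _).2 (inter_mem_idealsOn (isLowerIdeal_preimage_Ioi hW t))
  have hband : ∀ K ∈ 𝒥, ∀ t ∈ T, bandStart 𝒥 α K ≤ t → t < bandStart 𝒥 α K + α K →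
      W ⁻¹' Set.Ioi t ∩ Pstar = K := by
    intro K hK t _ h₁ h₂
    have hKP : K ⊆ Pstar := ((Set.Finite.mem_toFinset _).1 hK).1
    calc W ⁻¹' Set.Ioi t ∩ Pstar
        = {p | t < ((∑ K' ∈ 𝒥 with p ∈ K', α K' : ℕ) : ℝ)} ∩ Pstar :=
          Set.ext fun p => and_congr_left fun hp => by simp [hWP p hp]
      _ = K := by rw [setOf_lt_sum_eq hα hK h₁ h₂, Set.inter_eq_left.2 hKP]
  have hweight := sum_gapAfter_fiber_eq hkey (fun K _ => Nat.cast_nonneg (α K)) hT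
    (hbands (Finset.mem_union_left _ (Finset.mem_union_left _ (Finset.mem_insert_self _ _))))
    (hbands (Finset.mem_union_left _ (Finset.mem_union_left _
      (Finset.mem_insert_of_mem (Finset.mem_singleton_self _)))))
    (fun K hK => hbands (Finset.mem_union_left _ (Finset.mem_union_right _
      (Finset.mem_image_of_mem _ hK))))
    (fun K hK => hbands (Finset.mem_union_right _ (Finset.mem_image_of_mem _ hK))) hband
  rw [← Finset.sum_fiberwise_of_maps_to hkey]
  refine Set.finsetSum_mem_finsetSum _ _ _ fun K hK => ?_
  refine sum_smul_mem_dilate_convexHull ?_ (fun t _ => gapAfter_nonneg T t) ?_ (hweight K hK)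
  · exact ⟨_, genIdeal lt K, isLowerIdeal_genIdeal K,
      genIdeal_inter_eq ((Set.Finite.mem_toFinset _).1 hK), rfl⟩
  · exact fun t ht => ⟨_, isLowerIdeal_preimage_Ioi hW t, (Finset.mem_filter.1 ht).2, rfl⟩

theorem MCOP_subset_RPPmarked [IsStrictOrder P lt] (hmin : ∀ p, (∀ q, ¬ lt q p) → p ∈ Pstar)
    (hmax : ∀ p, (∀ q, ¬ lt p q) → p ∈ Pstar) (hC : C = (Pstar ∪ O)ᶜ) {lt' : P → P → Prop}
    (hlt' : ∀ p q, lt' p q ↔ lt p q ∧ p ∉ Pstar ∪ O) {α : Set P → ℕ}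
    (hα : ∀ K₁ K₂, α K₁ ≠ 0 → α K₂ ≠ 0 → K₁ ⊆ K₂ ∨ K₂ ⊆ K₁) :
    MCOP lt Pstar C O (∑ K ∈ idealFinset lt Pstar, (α K : ℝ) • ind K) ⊆
      RPPmarked lt lt' Pstar α := by
  intro x hx
  set 𝒥 := idealFinset lt Pstar
  set W := transferMap lt C x
  have hl : ∀ p ∈ Pstar, 0 ≤ (∑ K ∈ 𝒥, (α K : ℝ) • ind K) p := fun p _ => by
    rw [sum_smul_ind_apply]
    positivity
  have hx0 := nonneg_of_mem_MCOP hmax hC hl hx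
  have hWσ := transferMap_le hmin hmax hC hl hx fun p _ => sum_smul_ind_apply_le 𝒥 α p
  set T : Finset ℝ := bandEnds 𝒥 α ∪ (Finset.univ.image W ∪ Finset.univ.image (W - x))
  have hT : ∀ t ∈ T, 0 ≤ t ∧ t ≤ ∑ K ∈ 𝒥, (α K : ℝ) := by
    simp only [T, Finset.mem_union, Finset.mem_image, Finset.mem_univ, true_and]
    rintro t (ht | ⟨p, rfl⟩ | ⟨p, rfl⟩)
    · exact mem_bandEnds_bounds ht
    · exact ⟨(hx0 p).trans (sub_nonneg.1 (transferMap_sub_nonneg p)), hWσ p⟩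
    · exact ⟨transferMap_sub_nonneg p, (sub_le_self _ (hx0 p)).trans (hWσ p)⟩
  rw [eq_sum_gapAfter_smul_ind_maxElems hC hlt' hx0 (fun t ht => (hT t ht).1)
    (fun p => by simp [T, W]) (fun p => by simp [T, W])]
  exact sum_gapAfter_smul_ind_mem_RPPmarked (W := W) (T := T) hα
    (fun p q => transferMap_antitone hmax hC hl hx)
    (fun p hp => (transferMap_of_mem_Pstar hC hx hp).trans (sum_smul_ind_apply 𝒥 α p)) hT
    Finset.subset_union_left

end

theorem stmt19_general {P : Type*} [Fintype P] (lt : P → P → Prop)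
    (hirr : ∀ p, ¬ lt p p) (htr : ∀ a b c, lt a b → lt b c → lt a c)
    (Pstar C O : Set P)
    (hmin : ∀ p : P, (∀ q, ¬ lt q p) → p ∈ Pstar)
    (hmax : ∀ p : P, (∀ q, ¬ lt p q) → p ∈ Pstar)
    (hCO : C ∪ O = Pstarᶜ) (hdisj : C ∩ O = ∅)
    (lam : P → ℤ) (α : Set P → ℕ)
    (hαchain : ∀ K1 K2 : Set P, α K1 ≠ 0 → α K2 ≠ 0 → K1 ⊆ K2 ∨ K2 ⊆ K1)
    (hαsum : ∀ p ∈ Pstar, lam p =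
      ∑ K ∈ (Set.toFinite (idealsOn lt Pstar)).toFinset, (α K : ℤ) * K.indicator 1 p)
    (lt' : P → P → Prop)
    (hlt' : ∀ p q, lt' p q ↔ (lt p q ∧ p ∉ Pstar ∪ O)) :
    MCOP lt Pstar C O (fun p => (lam p : ℝ)) = RPPmarked lt lt' Pstar α := by
  have : IsStrictOrder P lt := { irrefl := hirr, trans := htr }
  have hC : C = (Pstar ∪ O)ᶜ := by
    ext p
    have h₁ := Set.ext_iff.1 hCO p
    have h₂ := Set.ext_iff.1 hdisj p
    simp only [Set.mem_union, Set.mem_compl_iff, Set.mem_inter_iff,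
      Set.mem_empty_iff_false] at h₁ h₂ ⊢
    tauto
  have hlam : MCOP lt Pstar C O (fun p => (lam p : ℝ)) =
      MCOP lt Pstar C O (∑ K ∈ idealFinset lt Pstar, (α K : ℝ) • ind K) :=
    MCOP_congr fun p hp => by
      rw [hαsum p hp, sum_smul_ind_apply]
      push_cast
      rw [Finset.sum_filter]
      refine Finset.sum_congr rfl fun K _ => ?_
      by_cases h : p ∈ K <;> simp [h]
  rw [hlam]
  exact (MCOP_subset_RPPmarked hmin hmax hC hlt' hαchain).antisymm
    (RPPmarked_subset_MCOP hC hlt' α)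

/-- For a nonnegative dominant marking `λ` with decomposition coefficients `α`, and with
`p <' q ↔ p < q ∧ p ∉ P* ∪ O`, the marked chain-order polytope `O_{C,O}(P, lt, λ)` equals
the Minkowski sum `Σ_{K ∈ 𝒥*} α_K · R_{ω_K}(P, lt, lt')`. -/
theorem stmt19 {P : Type*} [Fintype P] (lt : P → P → Prop)
    (hirr : ∀ p, ¬ lt p p) (htr : ∀ a b c, lt a b → lt b c → lt a c)
    (Pstar C O : Set P)
    (hmin : ∀ p : P, (∀ q, ¬ lt q p) → p ∈ Pstar)
    (hmax : ∀ p : P, (∀ q, ¬ lt p q) → p ∈ Pstar)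
    (hCO : C ∪ O = Pstarᶜ) (hdisj : C ∩ O = ∅)
    (lam : P → ℤ) (α : Set P → ℕ)
    (hlamnn : ∀ p ∈ Pstar, 0 ≤ lam p)
    (hdom : ∀ p q : P, p ∈ Pstar → q ∈ Pstar → lt p q → lam q ≤ lam p)
    (hαsupp : ∀ K : Set P, α K ≠ 0 → K ∈ idealsOn lt Pstar ∧ K.Nonempty)
    (hαchain : ∀ K1 K2 : Set P, α K1 ≠ 0 → α K2 ≠ 0 → K1 ⊆ K2 ∨ K2 ⊆ K1)
    (hαsum : ∀ p ∈ Pstar, lam p =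
      ∑ K ∈ (Set.toFinite (idealsOn lt Pstar)).toFinset, (α K : ℤ) * K.indicator 1 p)
    (lt' : P → P → Prop)
    (hlt' : ∀ p q, lt' p q ↔ (lt p q ∧ p ∉ Pstar ∪ O)) :
    MCOP lt Pstar C O (fun p => (lam p : ℝ)) = RPPmarked lt lt' Pstar α :=
  stmt19_general lt hirr htr Pstar C O hmin hmax hCO hdisj lam α hαchain hαsum lt' hlt'
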